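/- Let K = {w ∈ {a,b}⁺ : w begins with the letter a and the letter b occurs in w} (that is, K = a⁺b{a,b}*, over two distinct letters a, b of 𝔄). Then the 3-element monoid L₂¹ and the syntactic monoid M_synt(K) satisfy exactly the same identities (they generate the same variety); moreover, M_synt(K) has exactly five elements. -/

import Mathlib

/-- Words over the countably infinite alphabet `ℕ`. -/
abbrev Word : Type := List ℕ

/-- A monoid `M` satisfies the identity `u ≈ v` if every substitution of letters by
elements of `M` (equivalently, every monoid homomorphism from the free monoid) equalizes
`u` and `v`. -/
def Satisfies (M : Type*) [Monoid M] (u v : Word) : Prop :=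
  ∀ φ : ℕ → M, (u.map φ).prod = (v.map φ).prod

/-- A set of words `W` is stable with respect to a monoid `M`. -/
def Stable (W : Set Word) (M : Type*) [Monoid M] : Prop :=
  ∀ u v : Word, u ∈ W → Satisfies M u v → v ∈ W

/-- `u` is a `τ`-term for the monoid `M`. -/
def IsTerm (τ : Word → Word → Prop) (M : Type*) [Monoid M] (u : Word) : Prop :=
  ∀ v : Word, Satisfies M u v → τ u v

/-- The set of simple letters of a word. -/
def simpSet (u : Word) : Set ℕ := {x | u.count x = 1}

/-- The set of multiple letters of a word. -/
def mulSet (u : Word) : Set ℕ := {x | 2 ≤ u.count x}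

/-- The set of letters of a word. -/
def conSet (u : Word) : Set ℕ := {x | x ∈ u}

/-- The monoid congruence on the free monoid generated by the pairs `(a, a²)`. -/
inductive tau1 : Word → Word → Prop
  | base (a : ℕ) : tau1 [a] [a, a]
  | refl (u : Word) : tau1 u u
  | symm {u v : Word} : tau1 u v → tau1 v u
  | trans {u v x : Word} : tau1 u v → tau1 v x → tau1 u x
  | append {u v u' v' : Word} : tau1 u v → tau1 u' v' → tau1 (u ++ u') (v ++ v')

/-- The relation γ. -/
def gamma (u v : Word) : Prop := simpSet u = simpSet v ∧ mulSet u = mulSet v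

/-- The relation `τ₁ ∧ γ`. -/
def tau1gamma (u v : Word) : Prop := tau1 u v ∧ gamma u v

/-- A word is block-simple if every factor all of whose letters are multiple
(in particular, every block) involves at most one letter. -/
def BlockSimple (u : Word) : Prop :=
  ∀ p f s : Word, u = p ++ f ++ s → (∀ x ∈ f, x ∈ mulSet u) →
    ∀ x ∈ f, ∀ y ∈ f, x = y

/-- `assemble m t A = A 0 ++ t 0 :: A 1 ++ t 1 :: ... ++ t (m-1) :: A m`:
the word with blocks `A i` separated by the letters `t i`. -/
def assemble (m : ℕ) (t : Fin m → ℕ) (A : Fin (m + 1) → Word) : Word :=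
  A 0 ++ (List.ofFn fun i : Fin m => t i :: A i.succ).flatten

/-- Common core of the relations `β` and `∼_Q`: `u` and `v` decompose into blocks
separated by the same simple letters in the same order, corresponding blocks have the
same content; when `withOrder = true`, in corresponding blocks the order of first
occurrences of letters coincides. -/
def betaAux (withOrder : Bool) (u v : Word) : Prop :=
  ∃ (m : ℕ) (t : Fin m → ℕ) (A B : Fin (m + 1) → Word),
    u = assemble m t A ∧ v = assemble m t B ∧
    (∀ i : Fin m, u.count (t i) = 1) ∧ (∀ i : Fin m, v.count (t i) = 1) ∧
    (∀ i : Fin (m + 1), ∀ x ∈ A i, x ∈ mulSet u) ∧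
    (∀ i : Fin (m + 1), ∀ x ∈ B i, x ∈ mulSet v) ∧
    (∀ i : Fin (m + 1), ∀ x : ℕ, x ∈ A i ↔ x ∈ B i) ∧
    (withOrder = true → ∀ i : Fin (m + 1), ∀ x y : ℕ, x ∈ A i → y ∈ A i → x ≠ y →
      ((A i).idxOf x < (A i).idxOf y ↔ (B i).idxOf x < (B i).idxOf y))

/-- The relation β. -/
def beta : Word → Word → Prop := betaAux true

/-- The relation `∼_Q` (β without the condition on the order of first occurrences). -/
def simQ : Word → Word → Prop := betaAux false

/-- The words `u_n` (letters: `a = 0`, `b = 1`, `t_k = k + 1`). -/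
def uW : ℕ → Word
  | 0 => [0, 0, 1, 1]
  | k + 1 => (if k % 2 = 0 then 0 else 1) :: (k + 2) :: uW k

/-- The words `v_n` (letters: `a = 0`, `b = 1`, `t_k = k + 1`). -/
def vW : ℕ → Word
  | 0 => [1, 1, 0, 0]
  | k + 1 => (if k % 2 = 0 then 0 else 1) :: (k + 2) :: vW k

/-- A monoid satisfies the identity system
`Σ_n = {xtx ≈ xtx², xtx ≈ x²tx, xy²x ≈ x²y², u_n ≈ v_n}`. -/
def SatSigma (n : ℕ) (N : Type*) [Monoid N] : Prop :=
  Satisfies N [0, 1, 0] [0, 1, 0, 0] ∧ Satisfies N [0, 1, 0] [0, 0, 1, 0] ∧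
  Satisfies N [0, 1, 1, 0] [0, 0, 1, 1] ∧ Satisfies N (uW n) (vW n)

/-- A monoid is finitely based. -/
def FinBased (M : Type*) [Monoid M] : Prop :=
  ∃ S : Finset (Word × Word),
    (∀ p ∈ S, Satisfies M p.1 p.2) ∧
    ∀ (N : Type) [Monoid N], (∀ p ∈ S, Satisfies N p.1 p.2) →
      ∀ u v : Word, Satisfies M u v → Satisfies N u v

/-- `U_n = x y₁² y₂² ⋯ y_n² x` (letters: `x = 0`, `y_i = i`). -/
def Uw (n : ℕ) : Word := 0 :: (((List.range n).map fun i => [i + 1, i + 1]).flatten ++ [0])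

/-- `V_n = x y₁² x y₂² x ⋯ x y_n² x` (letters: `x = 0`, `y_i = i`). -/
def Vw (n : ℕ) : Word := 0 :: ((List.range n).map fun i => [i + 1, i + 1, 0]).flatten

/-- The language `a⁺bb⁺ta⁺ = {aⁱ bʲ t aᵏ : i, k ≥ 1, j ≥ 2}` (`a = 0`, `b = 1`, `t = 2`). -/
def Lab : Set Word := {w | ∃ i j k : ℕ, 1 ≤ i ∧ 2 ≤ j ∧ 1 ≤ k ∧
  w = List.replicate i 0 ++ List.replicate j 1 ++ 2 :: List.replicate k 0}

/-- The β-class of `atb²a` as an explicit language: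
`{aⁱ t bʲ a w : i ≥ 1, j ≥ 2} ∪ {aⁱ t bʲ aᵏ b w : i, j, k ≥ 1}`, `w ∈ {a,b}*`
(`a = 0`, `b = 1`, `t = 2`). -/
def LatBBa : Set Word :=
  {w | (∃ i j : ℕ, 1 ≤ i ∧ 2 ≤ j ∧ ∃ r : Word, (∀ x ∈ r, x = 0 ∨ x = 1) ∧
      w = List.replicate i 0 ++ 2 :: (List.replicate j 1 ++ 0 :: r)) ∨
    (∃ i j k : ℕ, 1 ≤ i ∧ 1 ≤ j ∧ 1 ≤ k ∧ ∃ r : Word, (∀ x ∈ r, x = 0 ∨ x = 1) ∧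
      w = List.replicate i 0 ++ 2 :: (List.replicate j 1 ++ (List.replicate k 0 ++ 1 :: r)))}

/-- `u` is a factor (subword) of `x`. -/
def IsFactorOf (u x : Word) : Prop := ∃ p s : Word, x = p ++ u ++ s

/-- The syntactic congruence of a language `W`. -/
def SyntCon (W : Set Word) : Con (FreeMonoid ℕ) where
  r u v := ∀ p s : Word,
    p ++ FreeMonoid.toList u ++ s ∈ W ↔ p ++ FreeMonoid.toList v ++ s ∈ W
  iseqv := ⟨fun _ _ _ => Iff.rfl, fun h p s => (h p s).symm,
    fun h h' p s => (h p s).trans (h' p s)⟩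
  mul' := by
    intro w x y z h h' p s
    have h1 := h p (FreeMonoid.toList y ++ s)
    have h2 := h' (p ++ FreeMonoid.toList x) s
    simp only [FreeMonoid.toList_mul, List.append_assoc] at h1 h2 ⊢
    exact h1.trans h2

/-- The syntactic monoid of a language `W`. -/
abbrev SyntMonoid (W : Set Word) : Type := (SyntCon W).Quotient

/-! ### Concrete finite monoids -/

/-- The 7-element monoid `A¹`: identity `e1` adjoined to the semigroup `A = ⟨a,b,c ∣ a²=a, b²=b, ab=ca=0, ac=cb=c⟩ = {a,b,c,ba,bc,0}` (`z0` is the zero). -/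
inductive A1M : Type
  | e1 | a | b | c | ba | bc | z0
deriving DecidableEq

/-- Multiplication of `A1M`. -/
def A1M.mul : A1M → A1M → A1M
  | .e1, .e1 => .e1
  | .e1, .a => .a
  | .e1, .b => .b
  | .e1, .c => .c
  | .e1, .ba => .ba
  | .e1, .bc => .bc
  | .e1, .z0 => .z0
  | .a, .e1 => .a
  | .a, .a => .a
  | .a, .b => .z0
  | .a, .c => .c
  | .a, .ba => .z0
  | .a, .bc => .z0
  | .a, .z0 => .z0
  | .b, .e1 => .b
  | .b, .a => .ba
  | .b, .b => .b
  | .b, .c => .bc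
  | .b, .ba => .ba
  | .b, .bc => .bc
  | .b, .z0 => .z0
  | .c, .e1 => .c
  | .c, .a => .z0
  | .c, .b => .c
  | .c, .c => .z0
  | .c, .ba => .z0
  | .c, .bc => .z0
  | .c, .z0 => .z0
  | .ba, .e1 => .ba
  | .ba, .a => .ba
  | .ba, .b => .z0
  | .ba, .c => .bc
  | .ba, .ba => .z0
  | .ba, .bc => .z0
  | .ba, .z0 => .z0
  | .bc, .e1 => .bc
  | .bc, .a => .z0
  | .bc, .b => .bc
  | .bc, .c => .z0
  | .bc, .ba => .z0
  | .bc, .bc => .z0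
  | .bc, .z0 => .z0
  | .z0, .e1 => .z0
  | .z0, .a => .z0
  | .z0, .b => .z0
  | .z0, .c => .z0
  | .z0, .ba => .z0
  | .z0, .bc => .z0
  | .z0, .z0 => .z0

instance : Monoid A1M where
  one := .e1
  mul := A1M.mul
  mul_assoc := by intro x y z; cases x <;> cases y <;> cases z <;> rfl
  one_mul := by intro x; cases x <;> rfl
  mul_one := by intro x; cases x <;> rfl
/-- The 6-element monoid `E¹`: identity `e1` adjoined to the semigroup `E = ⟨a,b,c ∣ a²=ab=0, ba=ca=a, b²=bc=b, c²=cb=c⟩ = {a,b,c,ac,0}` (`z0` is the zero). -/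
inductive E1M : Type
  | e1 | a | b | c | ac | z0
deriving DecidableEq

/-- Multiplication of `E1M`. -/
def E1M.mul : E1M → E1M → E1M
  | .e1, .e1 => .e1
  | .e1, .a => .a
  | .e1, .b => .b
  | .e1, .c => .c
  | .e1, .ac => .ac
  | .e1, .z0 => .z0
  | .a, .e1 => .a
  | .a, .a => .z0
  | .a, .b => .z0
  | .a, .c => .ac
  | .a, .ac => .z0
  | .a, .z0 => .z0
  | .b, .e1 => .b
  | .b, .a => .a
  | .b, .b => .b
  | .b, .c => .b
  | .b, .ac => .ac
  | .b, .z0 => .z0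
  | .c, .e1 => .c
  | .c, .a => .a
  | .c, .b => .c
  | .c, .c => .c
  | .c, .ac => .ac
  | .c, .z0 => .z0
  | .ac, .e1 => .ac
  | .ac, .a => .z0
  | .ac, .b => .ac
  | .ac, .c => .ac
  | .ac, .ac => .z0
  | .ac, .z0 => .z0
  | .z0, .e1 => .z0
  | .z0, .a => .z0
  | .z0, .b => .z0
  | .z0, .c => .z0
  | .z0, .ac => .z0
  | .z0, .z0 => .z0

instance : Monoid E1M where
  one := .e1
  mul := E1M.mul
  mul_assoc := by intro x y z; cases x <;> cases y <;> cases z <;> rfl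
  one_mul := by intro x; cases x <;> rfl
  mul_one := by intro x; cases x <;> rfl
/-- The 5-element monoid `A₀¹`: identity `e1` adjoined to the semigroup `A₀ = ⟨a,b ∣ a²=a, b²=b, ab=0⟩ = {a,b,ba,0}` (`z0` is the zero). -/
inductive A01M : Type
  | e1 | a | b | ba | z0
deriving DecidableEq

/-- Multiplication of `A01M`. -/
def A01M.mul : A01M → A01M → A01M
  | .e1, .e1 => .e1
  | .e1, .a => .a
  | .e1, .b => .b
  | .e1, .ba => .ba
  | .e1, .z0 => .z0
  | .a, .e1 => .a
  | .a, .a => .a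
  | .a, .b => .z0
  | .a, .ba => .z0
  | .a, .z0 => .z0
  | .b, .e1 => .b
  | .b, .a => .ba
  | .b, .b => .b
  | .b, .ba => .ba
  | .b, .z0 => .z0
  | .ba, .e1 => .ba
  | .ba, .a => .ba
  | .ba, .b => .z0
  | .ba, .ba => .z0
  | .ba, .z0 => .z0
  | .z0, .e1 => .z0
  | .z0, .a => .z0
  | .z0, .b => .z0
  | .z0, .ba => .z0
  | .z0, .z0 => .z0

instance : Monoid A01M where
  one := .e1
  mul := A01M.mul
  mul_assoc := by intro x y z; cases x <;> cases y <;> cases z <;> rfl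
  one_mul := by intro x; cases x <;> rfl
  mul_one := by intro x; cases x <;> rfl


/-- The 3-element monoid `L₂¹`: the two-element left-zero semigroup with identity adjoined. -/
inductive LZ1 : Type
  | e | a | b
deriving DecidableEq

instance : Fintype LZ1 :=
  ⟨{LZ1.e, LZ1.a, LZ1.b}, fun x => by cases x <;> simp⟩

instance : Monoid LZ1 where
  one := .e
  mul x y := match x with
    | .e => y
    | .a => .a
    | .b => .b
  mul_assoc := by intro x y z; cases x <;> cases y <;> cases z <;> rfl
  one_mul := by intro x; cases x <;> rfl
  mul_one := by intro x; cases x <;> rfl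

/-- The 3-element monoid `M(x) = {1, x, 0}` with `x·x = 0`. -/
inductive MX : Type
  | e | x | z
deriving DecidableEq

instance : Fintype MX :=
  ⟨{MX.e, MX.x, MX.z}, fun x => by cases x <;> simp⟩

instance : Monoid MX where
  one := .e
  mul a b := match a, b with
    | .e, b => b
    | a, .e => a
    | _, _ => .z
  mul_assoc := by intro x y z; cases x <;> cases y <;> cases z <;> rfl
  one_mul := by intro x; cases x <;> rfl
  mul_one := by intro x; cases x <;> rfl

/-!
`L₂¹` satisfies `u ≈ v` exactly when, for every set of letters, `u` and `v` have the same first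
letter from that set: send that letter to `a`, the others of the set to `b`, the rest to `1`.
Conversely, in any monoid with `xyx = xy` (hence `x² = x`) a product is unchanged by deleting the
later occurrences of each factor, so such a monoid satisfies every identity of `L₂¹`.

The syntactic monoid of `K = a⁺b{a,b}*` is a five-element monoid `{1, [a], [ab], [b], 0}`: a
surjective hom from the free monoid onto a concrete model recognizes `K` as the preimage of `[ab]`,
and `[ab]` separates the points of the model. This monoid satisfies `xyx = xy` and contains `L₂¹`
as `{1, [ab], [b]}`.
-/

theorem Satisfies.of_injective {M N : Type*} [Monoid M] [Monoid N] {f : N →* M}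
    (hf : Function.Injective f) {u v : Word} (h : Satisfies M u v) : Satisfies N u v := by
  intro φ
  apply hf
  simpa only [map_list_prod, List.map_map] using h (f ∘ φ)

theorem LZ1.mul_eq_left {m : LZ1} (hm : m ≠ 1) (n : LZ1) : m * n = m := by
  revert m n
  decide

theorem LZ1.prod_map (φ : ℕ → LZ1) (u : Word) :
    (u.map φ).prod = ((u.find? (φ · ≠ 1)).map φ).getD 1 := by
  induction u with
  | nil => rfl
  | cons x u ih =>
    by_cases hx : φ x = 1
    · simp [hx, ih]
    · simp [hx, LZ1.mul_eq_left hx]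

theorem find?_eq_of_satisfies_LZ1 {u v : Word} (h : Satisfies LZ1 u v) (p : ℕ → Bool) :
    u.find? p = v.find? p := by
  generalize hu : u.find? p = o
  let φ : ℕ → LZ1 := fun x => if p x then (if some x = o then .a else .b) else 1
  have hφ : (fun x => decide (φ x ≠ 1)) = p := by
    funext x
    by_cases hx : p x
    · simp only [φ, hx, if_true]
      split_ifs <;> decide
    · simp [φ, hx]
  have key := h φ
  rw [LZ1.prod_map, LZ1.prod_map, hφ, hu] at key
  cases o with
  | none =>
    cases hv : v.find? p with
    | none => rfl
    | some z => simp [hv, φ, List.find?_some hv] at key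
  | some y =>
    cases hv : v.find? p with
    | none => simp [hv, φ, List.find?_some hu] at key
    | some z =>
      have hzy : z = y := by simpa [hv, φ, List.find?_some hu, List.find?_some hv] using key
      rw [hzy]

section LeftRegular

variable {N : Type*} [Monoid N]

theorem mul_mul_eq_of_mul_eq (lrb : ∀ m n : N, m * n * m = m * n) {m x : N} (h : m * x = m)
    (n : N) : m * n * x = m * n :=
  calc m * n * x = m * x * n * x := by rw [h]
    _ = m * (x * n * x) := by simp only [mul_assoc]
    _ = m * n := by rw [lrb, ← mul_assoc, h]

theorem mul_prod_map_filter_ne (lrb : ∀ m n : N, m * n * m = m * n) (φ : ℕ → N) (x : ℕ)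
    (u : Word) {m : N} (hm : m * φ x = m) :
    m * (u.map φ).prod = m * ((u.filter (· ≠ x)).map φ).prod := by
  induction u generalizing m with
  | nil => rfl
  | cons y u ih =>
    by_cases hy : y = x
    · subst hy
      rw [List.filter_cons_of_neg (by simp), List.map_cons, List.prod_cons, ← mul_assoc, hm,
        ih hm]
    · rw [List.filter_cons_of_pos (by simpa using hy), List.map_cons, List.map_cons,
        List.prod_cons, List.prod_cons, ← mul_assoc, ← mul_assoc]
      exact ih (mul_mul_eq_of_mul_eq lrb hm _)

theorem prod_map_eq_of_find?_eq (lrb : ∀ m n : N, m * n * m = m * n) (φ : ℕ → N) {u v : Word}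
    (h : ∀ p : ℕ → Bool, u.find? p = v.find? p) : (u.map φ).prod = (v.map φ).prod := by
  induction hn : u.length using Nat.strong_induction_on generalizing u v with
  | _ n ih =>
  have hfirst := h fun _ => true
  rcases u with _ | ⟨x, u⟩ <;> rcases v with _ | ⟨y, v⟩ <;> simp only [List.find?_nil,
    List.find?_cons_of_pos, reduceCtorEq, Option.some.injEq] at hfirst
  · rfl
  subst hfirst
  have hidem : φ x * φ x = φ x := by simpa using lrb (φ x) 1
  have hfilter : ∀ p, (u.filter (· ≠ x)).find? p = (v.filter (· ≠ x)).find? p := by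
    intro p
    simpa [List.find?_filter] using h fun y => y ≠ x ∧ p y
  rw [List.map_cons, List.map_cons, List.prod_cons, List.prod_cons,
    mul_prod_map_filter_ne lrb φ x u hidem, mul_prod_map_filter_ne lrb φ x v hidem,
    ih _ (hn ▸ Nat.lt_succ_of_le (List.length_filter_le _ _)) hfilter rfl]

theorem satisfies_of_satisfies_LZ1 (lrb : ∀ m n : N, m * n * m = m * n) {u v : Word}
    (h : Satisfies LZ1 u v) : Satisfies N u v :=
  fun φ => prod_map_eq_of_find?_eq lrb φ (find?_eq_of_satisfies_LZ1 h)

end LeftRegular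

section SyntacticMonoid

variable {N : Type*} [Monoid N] {f : FreeMonoid ℕ →* N} {T : Set N} {W : Set Word}

theorem syntCon_eq_ker (hf : Function.Surjective f)
    (hT : ∀ x y : N, (∀ P S : N, P * x * S ∈ T ↔ P * y * S ∈ T) → x = y)
    (hW : ∀ w, w ∈ W ↔ f (FreeMonoid.ofList w) ∈ T) : SyntCon W = Con.ker f := by
  have hctx : ∀ (u : FreeMonoid ℕ) (p s : Word),
      p ++ FreeMonoid.toList u ++ s ∈ W ↔ f (.ofList p) * f u * f (.ofList s) ∈ T := by
    intro u p s
    rw [hW, FreeMonoid.ofList_append, FreeMonoid.ofList_append, FreeMonoid.ofList_toList,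
      map_mul, map_mul]
  refine Con.ext fun u v => ⟨fun h => hT _ _ fun P S => ?_, fun h p s => ?_⟩
  · obtain ⟨p, rfl⟩ := hf P
    obtain ⟨s, rfl⟩ := hf S
    simpa only [hctx, FreeMonoid.ofList_toList] using h p.toList s.toList
  · simp only [hctx, (Con.ker_rel f).mp h]

noncomputable def syntMonoidEquiv (hf : Function.Surjective f)
    (hT : ∀ x y : N, (∀ P S : N, P * x * S ∈ T ↔ P * y * S ∈ T) → x = y)
    (hW : ∀ w, w ∈ W ↔ f (FreeMonoid.ofList w) ∈ T) : SyntMonoid W ≃* N :=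
  (Con.congr (.refl _) (by rw [syntCon_eq_ker hf hT hW]; rfl)).trans
    (Con.quotientKerEquivOfSurjective f hf)

end SyntacticMonoid

/-- `one`, `a`, `ab`, `b`, `zero` stand for the syntactic classes of the empty word, of `a⁺`,
of `K`, of `b{a,b}*`, and of the words containing a letter other than `a = 0`, `b = 1`. -/
inductive KClass : Type
  | one | a | ab | b | zero
deriving DecidableEq

namespace KClass

instance : Fintype KClass :=
  ⟨{one, a, ab, b, zero}, fun x => by cases x <;> simp⟩

instance : Monoid KClass where
  one := one
  mul x y := match x, y with
    | one, y => y
    | zero, _ => zero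
    | _, zero => zero
    | a, one => a
    | a, a => a
    | a, _ => ab
    | x, _ => x
  mul_assoc := by decide
  one_mul := by decide
  mul_one := by decide

def ofLetter : ℕ → KClass
  | 0 => a
  | 1 => b
  | _ => zero

theorem mul_mul_self_eq : ∀ x y : KClass, x * y * x = x * y := by decide

theorem eq_of_forall_mul_mul_mem_ab : ∀ x y : KClass,
    (∀ P S : KClass, P * x * S ∈ ({ab} : Set KClass) ↔ P * y * S ∈ ({ab} : Set KClass)) →
      x = y := by
  decide

def ofLZ1 : LZ1 →* KClass where
  toFun
    | .e => one
    | .a => ab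
    | .b => b
  map_one' := rfl
  map_mul' := by decide

theorem ofLZ1_injective : Function.Injective ofLZ1 := by decide

end KClass

open KClass

def kClass : FreeMonoid ℕ →* KClass := FreeMonoid.lift ofLetter

theorem kClass_surjective : Function.Surjective kClass := by
  intro x
  cases x
  exacts [⟨.ofList [], rfl⟩, ⟨.ofList [0], rfl⟩, ⟨.ofList [0, 1], rfl⟩, ⟨.ofList [1], rfl⟩,
    ⟨.ofList [2], rfl⟩]

theorem kClass_ne_zero_iff (w : Word) :
    kClass (.ofList w) ≠ zero ↔ ∀ c ∈ w, c = 0 ∨ c = 1 := by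
  induction w with
  | nil => decide
  | cons c w ih =>
    rw [FreeMonoid.ofList_cons, map_mul, List.forall_mem_cons]
    generalize kClass (.ofList w) = y at ih ⊢
    rcases c with _ | _ | c <;> cases y <;> simp +decide [kClass, ofLetter] at ih ⊢ <;> tauto

theorem kClass_eq_ab_or_b_iff (w : Word) :
    kClass (.ofList w) = ab ∨ kClass (.ofList w) = b ↔ (∀ c ∈ w, c = 0 ∨ c = 1) ∧ 1 ∈ w := by
  induction w with
  | nil => decide
  | cons c w ih =>
    rw [FreeMonoid.ofList_cons, map_mul, List.forall_mem_cons, List.mem_cons]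
    have hzero := kClass_ne_zero_iff w
    generalize kClass (.ofList w) = y at ih hzero ⊢
    rcases c with _ | _ | c <;> cases y <;> simp +decide [kClass, ofLetter] at ih hzero ⊢ <;>
      tauto

abbrev langK : Set Word := {x : Word | (∀ c ∈ x, c = 0 ∨ c = 1) ∧ x.head? = some 0 ∧ 1 ∈ x}

theorem mem_langK_iff (w : Word) : w ∈ langK ↔ kClass (.ofList w) ∈ ({ab} : Set KClass) := by
  rcases w with _ | ⟨c, w⟩
  · decide
  rw [Set.mem_singleton_iff, FreeMonoid.ofList_cons, map_mul, Set.mem_ofPred_eq,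
    List.forall_mem_cons, List.head?_cons, List.mem_cons]
  have hab := kClass_eq_ab_or_b_iff w
  generalize kClass (.ofList w) = y at hab
  rcases c with _ | _ | c <;> cases y <;> simp +decide [kClass, ofLetter] at hab ⊢ <;> tauto

theorem stmt14 :
    (∀ u v : Word, Satisfies LZ1 u v ↔
      Satisfies (SyntMonoid {x : Word | (∀ c ∈ x, c = 0 ∨ c = 1) ∧
        x.head? = some 0 ∧ 1 ∈ x}) u v) ∧
    Nat.card (SyntMonoid {x : Word | (∀ c ∈ x, c = 0 ∨ c = 1) ∧
      x.head? = some 0 ∧ 1 ∈ x}) = 5 := by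
  let e : SyntMonoid langK ≃* KClass :=
    syntMonoidEquiv kClass_surjective eq_of_forall_mul_mul_mem_ab mem_langK_iff
  refine ⟨fun u v => ⟨fun h => ?_, fun h => ?_⟩, ?_⟩
  · exact (satisfies_of_satisfies_LZ1 mul_mul_self_eq h).of_injective
      (f := e.toMonoidHom) e.injective
  · exact (h.of_injective (f := e.symm.toMonoidHom) e.symm.injective).of_injective
      ofLZ1_injective
  · rw [Nat.card_congr e.toEquiv, Nat.card_eq_fintype_card]
    rfl
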